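/- Let X, X'_1, X'_2 be mutually independent random elements with X'_1 and X'_2 identically distributed, let f be a measurable real-valued function, and set Y_1 = f(X, X'_1), Y_2 = f(X, X'_2). If Y_1 is square-integrable, then Var(E[Y_1 | X]) = Cov(Y_1, Y_2). -/

import Mathlib

open MeasureTheory ProbabilityTheory Filter
open scoped ENNReal NNReal

lemma variance_congr' {Ω : Type*} [MeasurableSpace Ω] {μ : Measure Ω} {f g : Ω → ℝ}
    (h : f =ᵐ[μ] g) : variance f μ = variance g μ := by
  have hint : ∫ ω, f ω ∂μ = ∫ ω, g ω ∂μ := integral_congr_ae h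
  unfold ProbabilityTheory.variance ProbabilityTheory.evariance
  rw [hint]
  congr 1
  refine lintegral_congr_ae ?_
  filter_upwards [h] with ω hω
  rw [hω]

/-- **Classical Sobol Pick-and-Freeze identity.** If `X, X'_1, X'_2` are mutually
independent with `X'_1, X'_2` identically distributed, `Y_1 = f (X, X'_1)`,
`Y_2 = f (X, X'_2)` and `Y_1` is square-integrable, then
`Var (E[Y_1 | X]) = Cov (Y_1, Y_2)`. -/
theorem pick_and_freeze_sobol
    {Ω : Type*} {E E' : Type u} [MeasurableSpace Ω] [mE : MeasurableSpace E]
    [mE' : MeasurableSpace E'] (P : Measure Ω) [IsProbabilityMeasure P]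
    (X : Ω → E) (X' : Fin 2 → Ω → E')
    (hX : Measurable X) (hX' : ∀ i, Measurable (X' i))
    (hindep : iIndepFun
      (β := fun i : Option (Fin 2) => Option.elim i E fun _ => E')
      (m := fun i => match i with | none => mE | some _ => mE')
      (fun i => match i with | none => X | some j => X' j) P)
    (hid : Measure.map (X' 0) P = Measure.map (X' 1) P)
    (f : E × E' → ℝ) (hf : Measurable f)
    (Y : Fin 2 → Ω → ℝ) (hYdef : ∀ i ω, Y i ω = f (X ω, X' i ω))
    (hL2 : MemLp (Y 0) 2 P) :
    variance (MeasureTheory.condExp (MeasurableSpace.comap X mE) P (Y 0)) P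
      = ∫ ω, (Y 0 ω - ∫ ω', Y 0 ω' ∂P) * (Y 1 ω - ∫ ω', Y 1 ω' ∂P) ∂P := by
  have hY0 : Y 0 = fun ω => f (X ω, X' 0 ω) := funext fun ω => hYdef 0 ω
  have hY1 : Y 1 = fun ω => f (X ω, X' 1 ω) := funext fun ω => hYdef 1 ω
  set μ : Measure E := P.map X with hμdef
  set ν : Measure E' := P.map (X' 0) with hνdef
  haveI : IsProbabilityMeasure μ := Measure.isProbabilityMeasure_map hX.aemeasurable
  haveI : IsProbabilityMeasure ν := Measure.isProbabilityMeasure_map (hX' 0).aemeasurable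
  -- independence consequences
  have hiXX0 : IndepFun X (X' 0) P :=
    hindep.indepFun (show (none : Option (Fin 2)) ≠ some 0 by simp)
  have hiXX1 : IndepFun X (X' 1) P :=
    hindep.indepFun (show (none : Option (Fin 2)) ≠ some 1 by simp)
  have hiX01 : IndepFun (X' 0) (X' 1) P :=
    hindep.indepFun (show (some 0 : Option (Fin 2)) ≠ some 1 by simp)
  have hmap0 : P.map (fun ω => (X ω, X' 0 ω)) = μ.prod ν :=
    (indepFun_iff_map_prod_eq_prod_map_map hX.aemeasurable (hX' 0).aemeasurable).mp hiXX0
  have hmap1 : P.map (fun ω => (X ω, X' 1 ω)) = μ.prod ν := by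
    rw [(indepFun_iff_map_prod_eq_prod_map_map hX.aemeasurable (hX' 1).aemeasurable).mp hiXX1,
      ← hid]
  have hmapW : P.map (fun ω => (X' 0 ω, X' 1 ω)) = ν.prod ν := by
    rw [(indepFun_iff_map_prod_eq_prod_map_map (hX' 0).aemeasurable (hX' 1).aemeasurable).mp hiX01,
      ← hid]
  have hiXW : IndepFun X (fun ω => (X' 0 ω, X' 1 ω)) P :=
    (hindep.indepFun_prodMk (fun i => by cases i with | none => exact hX | some j => exact hX' j) (some 0) (some 1) none (by simp) (by simp)).symm
  have hmapT : P.map (fun ω => (X ω, (X' 0 ω, X' 1 ω))) = μ.prod (ν.prod ν) := by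
    rw [(indepFun_iff_map_prod_eq_prod_map_map hX.aemeasurable
      ((hX' 0).prodMk (hX' 1)).aemeasurable).mp hiXW, hmapW]
  -- the conditional mean function
  set g : E → ℝ := fun x => ∫ y, f (x, y) ∂ν with hgdef
  have hgsm : StronglyMeasurable g := hf.stronglyMeasurable.integral_prod_right'
  have hfL2 : MemLp f 2 (μ.prod ν) := by
    rw [← hmap0]
    refine (memLp_map_measure_iff hf.stronglyMeasurable.aestronglyMeasurable
      (hX.prodMk (hX' 0)).aemeasurable).mpr ?_
    have he : (f ∘ fun a => (X a, X' 0 a)) = Y 0 := by rw [hY0]; rfl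
    rw [he]; exact hL2
  have hfInt : Integrable f (μ.prod ν) := hfL2.integrable one_le_two
  have hgInt : Integrable g μ := hfInt.integral_prod_left
  set m : ℝ := ∫ x, g x ∂μ with hmdef
  have hEY0 : ∫ ω, Y 0 ω ∂P = m := by
    rw [hY0, ← integral_map (hX.prodMk (hX' 0)).aemeasurable
      hf.stronglyMeasurable.aestronglyMeasurable, hmap0, integral_prod _ hfInt]
  have hEY1 : ∫ ω, Y 1 ω ∂P = m := by
    rw [hY1, ← integral_map (hX.prodMk (hX' 1)).aemeasurable
      hf.stronglyMeasurable.aestronglyMeasurable, hmap1, integral_prod _ hfInt]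
  -- conditional expectation identification
  have hm : MeasurableSpace.comap X mE ≤ ‹MeasurableSpace Ω› := hX.comap_le
  haveI : SigmaFinite (P.trim hm) := inferInstance
  have hZint : Integrable (fun ω => g (X ω)) P := by
    have := (integrable_map_measure hgsm.aestronglyMeasurable hX.aemeasurable).mp
      (hμdef ▸ hgInt)
    exact this
  have hce : (fun ω => g (X ω)) =ᵐ[P] MeasureTheory.condExp (MeasurableSpace.comap X mE) P (Y 0) := by
    refine ae_eq_condExp_of_forall_setIntegral_eq hm (hL2.integrable one_le_two)
      (fun s _ _ => hZint.integrableOn) (fun s hs _ => ?_) ?_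
    · obtain ⟨A, hA, rfl⟩ := hs
      have h1 : ∫ ω in X ⁻¹' A, g (X ω) ∂P = ∫ x in A, g x ∂μ :=
        (setIntegral_map hA hgsm.aestronglyMeasurable hX.aemeasurable).symm
      have h2 : ∫ ω in X ⁻¹' A, Y 0 ω ∂P = ∫ x in A, g x ∂μ := by
        rw [hY0]
        have hpre : X ⁻¹' A = (fun ω => (X ω, X' 0 ω)) ⁻¹' (A ×ˢ Set.univ) := by
          ext ω; simp
        rw [hpre, ← setIntegral_map (hA.prod MeasurableSet.univ)
          hf.stronglyMeasurable.aestronglyMeasurable (hX.prodMk (hX' 0)).aemeasurable, hmap0,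
          setIntegral_prod _ hfInt.integrableOn]
        simp only [Measure.restrict_univ]
        rfl
      rw [h1, h2]
    · exact StronglyMeasurable.aestronglyMeasurable
        (hgsm.comp_measurable (measurable_iff_comap_le.mpr le_rfl))
  -- integrability of the product kernel
  set F : E × (E' × E') → ℝ := fun q => (f (q.1, q.2.1) - m) * (f (q.1, q.2.2) - m) with hFdef
  have hp1 : MeasurePreserving (fun q : E × E' × E' => (q.1, q.2.1))
      (μ.prod (ν.prod ν)) (μ.prod ν) :=
    (MeasurePreserving.id μ).prod (⟨measurable_fst, by simp⟩ : MeasurePreserving Prod.fst (ν.prod ν) ν)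
  have hp2 : MeasurePreserving (fun q : E × E' × E' => (q.1, q.2.2))
      (μ.prod (ν.prod ν)) (μ.prod ν) :=
    (MeasurePreserving.id μ).prod (⟨measurable_snd, by simp⟩ : MeasurePreserving Prod.snd (ν.prod ν) ν)
  have h1L2 : MemLp (fun q : E × E' × E' => f (q.1, q.2.1) - m) 2 (μ.prod (ν.prod ν)) :=
    (hfL2.comp_measurePreserving hp1).sub (memLp_const m)
  have h2L2 : MemLp (fun q : E × E' × E' => f (q.1, q.2.2) - m) 2 (μ.prod (ν.prod ν)) :=
    (hfL2.comp_measurePreserving hp2).sub (memLp_const m)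
  have hFInt : Integrable F (μ.prod (ν.prod ν)) := by
    have := h2L2.smul (r := 1) h1L2
    exact memLp_one_iff_integrable.mp this
  -- inner Fubini computation
  have hinner : ∀ᵐ x ∂μ, ∫ p, F (x, p) ∂(ν.prod ν) = (g x - m) ^ 2 := by
    filter_upwards [hfInt.prod_right_ae] with x hx
    have hmul : ∫ p : E' × E', (f (x, p.1) - m) * (f (x, p.2) - m) ∂(ν.prod ν)
        = (∫ u, (f (x, u) - m) ∂ν) * ∫ v, (f (x, v) - m) ∂ν :=
      integral_prod_mul (fun u => f (x, u) - m) (fun v => f (x, v) - m)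
    have hsub : ∫ u, (f (x, u) - m) ∂ν = g x - m := by
      rw [integral_sub hx (integrable_const m), integral_const]
      simp [hgdef]
    calc ∫ p, F (x, p) ∂(ν.prod ν)
        = (∫ u, (f (x, u) - m) ∂ν) * ∫ v, (f (x, v) - m) ∂ν := hmul
      _ = (g x - m) ^ 2 := by rw [hsub]; ring
  have hkey : ∫ q, F q ∂(μ.prod (ν.prod ν)) = ∫ x, (g x - m) ^ 2 ∂μ := by
    rw [integral_prod _ hFInt]
    exact integral_congr_ae hinner
  have hsqInt : Integrable (fun x => (g x - m) ^ 2) μ :=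
    hFInt.integral_prod_left.congr hinner
  -- Z := g ∘ X is in L2
  have hgmL2 : MemLp (fun x => g x - m) 2 μ :=
    (memLp_two_iff_integrable_sq
      ((hgsm.sub stronglyMeasurable_const).aestronglyMeasurable)).mpr hsqInt
  have hgL2 : MemLp g 2 μ := by
    have h2 : ((fun x => g x - m) + fun _ => m) = g := by funext x; simp
    rw [← h2]
    exact hgmL2.add (memLp_const m)
  have hZL2 : MemLp (fun ω => g (X ω)) 2 P :=
    hgL2.comp_measurePreserving (⟨hX, hμdef.symm⟩ : MeasurePreserving X P μ)
  -- compute the variance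
  have hEZ : ∫ ω, g (X ω) ∂P = m := by
    rw [← integral_map hX.aemeasurable hgsm.aestronglyMeasurable, ← hμdef]
  have hvar : variance (MeasureTheory.condExp (MeasurableSpace.comap X mE) P (Y 0)) P
      = ∫ x, (g x - m) ^ 2 ∂μ := by
    rw [← variance_congr' hce]
    rw [variance_eq_integral hZL2.1.aemeasurable]
    change ∫ ω, ((((fun ω => g (X ω)) - fun _ => ∫ ω', g (X ω') ∂P) ^ (2 : ℕ) : Ω → ℝ)) ω ∂P = _
    have hfun : ((fun ω => g (X ω)) - fun _ => ∫ ω', g (X ω') ∂P) ^ (2 : ℕ)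
        = fun ω => (g (X ω) - m) ^ 2 := by
      funext ω
      simp [hEZ]
    rw [hfun, ← integral_map (f := fun x => (g x - m) ^ 2) hX.aemeasurable
      (((hgsm.sub stronglyMeasurable_const).pow 2).aestronglyMeasurable), ← hμdef]
  -- compute the covariance
  have hcov : ∫ ω, (Y 0 ω - ∫ ω', Y 0 ω' ∂P) * (Y 1 ω - ∫ ω', Y 1 ω' ∂P) ∂P
      = ∫ x, (g x - m) ^ 2 ∂μ := by
    rw [hEY0, hEY1, hY0, hY1]
    have hcomp : ∀ ω, (f (X ω, X' 0 ω) - m) * (f (X ω, X' 1 ω) - m)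
        = F (X ω, (X' 0 ω, X' 1 ω)) := fun ω => rfl
    simp_rw [hcomp]
    have hFmeas : Measurable F :=
      ((hf.comp (measurable_fst.prodMk (measurable_fst.comp measurable_snd))).sub
        measurable_const).mul
        ((hf.comp (measurable_fst.prodMk (measurable_snd.comp measurable_snd))).sub
        measurable_const)
    rw [← integral_map (f := F) (hX.aemeasurable.prodMk ((hX' 0).prodMk (hX' 1)).aemeasurable)
      hFmeas.stronglyMeasurable.aestronglyMeasurable, hmapT, hkey]
  rw [hvar, hcov]
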